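/- Let L be a finite lattice and f : L → R a function into a commutative ring. Define the matrix M indexed by L with entries M(a,b) = f(a ∨ b). Then det M = Π_{a ∈ L} ( Σ_{c ≥ a} μ(a,c)·f(c) ), where μ is the Möbius function of L. -/

import Mathlib

/-!
With `Z a c = [a ≤ c]` and `g a = ∑_{c ≥ a} μ(a, c) f(c)`, Möbius inversion gives
`f x = ∑_{c ≥ x} g c`, and `c ≥ a ⊔ b` iff `c ≥ a` and `c ≥ b`, so
`f (a ⊔ b) = ∑_c Z a c * g c * Z b c`, i.e. the join matrix is `Z * diagonal g * Zᵀ`.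
Ordering `L` by a linear extension makes `Z` unitriangular, so `det Z = 1`.
-/

open Finset Matrix

namespace Matrix

def zetaMatrix (L R : Type*) [LE L] [DecidableRel ((· ≤ ·) : L → L → Prop)] [Zero R] [One R] :
    Matrix L L R :=
  of fun a c => if a ≤ c then 1 else 0

variable {L R : Type*} [Fintype L] [DecidableEq L]

theorem det_zetaMatrix [PartialOrder L] [DecidableRel ((· ≤ ·) : L → L → Prop)] [CommRing R] :
    (zetaMatrix L R).det = 1 := by
  let _ : Fintype (LinearExtension L) := ‹Fintype L›
  let e : L ≃ LinearExtension L := Equiv.refl L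
  have upper : ((zetaMatrix L R).submatrix e.symm e.symm).IsUpperTriangular := fun i j hji =>
    if_neg fun hij => ((toLinearExtension (α := L)).monotone hij).not_gt hji
  rw [← det_submatrix_equiv_self e.symm, det_of_isUpperTriangular upper]
  exact prod_eq_one fun i _ => if_pos le_rfl

theorem zetaMatrix_mul_diagonal_mul_transpose [SemilatticeSup L]
    [DecidableRel ((· ≤ ·) : L → L → Prop)] [CommSemiring R] (g : L → R) :
    zetaMatrix L R * diagonal g * (zetaMatrix L R)ᵀ =
      of fun a b => ∑ c ∈ univ.filter (a ⊔ b ≤ ·), g c := by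
  ext a b
  rw [mul_apply, of_apply, sum_filter]
  refine sum_congr rfl fun c _ => ?_
  simp only [mul_diagonal, transpose_apply, zetaMatrix, of_apply, sup_le_iff, boole_mul, ite_and,
    mul_boole]
  split_ifs <;> rfl

end Matrix

namespace IncidenceAlgebra

theorem sum_filter_le_sum_filter_le_mu_mul {L R : Type*} [Fintype L] [PartialOrder L]
    [LocallyFiniteOrder L] [DecidableEq L] [DecidableRel ((· ≤ ·) : L → L → Prop)] [Ring R]
    (f : L → R) (x : L) :
    ∑ c ∈ univ.filter (x ≤ ·), ∑ d ∈ univ.filter (c ≤ ·), mu R c d * f d = f x := by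
  calc ∑ c ∈ univ.filter (x ≤ ·), ∑ d ∈ univ.filter (c ≤ ·), mu R c d * f d
      = ∑ d, ∑ c ∈ Icc x d, mu R c d * f d := sum_comm' fun c d => by simp
    _ = ∑ d, (if x = d then 1 else 0) * f d := by simp only [← sum_mul, sum_Icc_mu_left]
    _ = f x := by simp

end IncidenceAlgebra

/-- **Dual Lindström.** For a finite lattice `L` and `f : L → R`, the matrix with entries
`f (a ⊔ b)` has determinant `∏ a, ∑ c ≥ a, μ(a,c) · f(c)`, where `μ` is the Möbius
function of `L`. -/
theorem det_join_matrix {L : Type*} [Fintype L] [Lattice L] [DecidableEq L]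
    [LocallyFiniteOrder L] [DecidableRel ((· ≤ ·) : L → L → Prop)]
    {R : Type*} [CommRing R] (f : L → R) :
    Matrix.det (Matrix.of fun a b : L => f (a ⊔ b)) =
      ∏ a : L, ∑ c ∈ Finset.univ.filter (a ≤ ·), IncidenceAlgebra.mu R a c * f c := by
  set g : L → R := fun a => ∑ c ∈ univ.filter (a ≤ ·), IncidenceAlgebra.mu R a c * f c
  have factor :
      (of fun a b : L => f (a ⊔ b)) = zetaMatrix L R * diagonal g * (zetaMatrix L R)ᵀ := by
    simp only [zetaMatrix_mul_diagonal_mul_transpose, g,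
      IncidenceAlgebra.sum_filter_le_sum_filter_le_mu_mul]
  rw [factor, det_mul, det_mul, det_transpose, det_zetaMatrix, det_diagonal, one_mul, mul_one]
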